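/- For every g > 0, ∫_{0}^{∞} ∫_{0}^{∞} σ^{−4} (1 + ξ g/σ)^{−3(1+1/ξ)} dσ dξ = (2/9) g^{−3} ln 2. -/

import Mathlib

/-!
With `w = σ / (σ + a)` the inner integral `∫₀^∞ σ⁻⁴ (1 + a/σ)^(-p) dσ` becomes
`a⁻³ ∫₀¹ w^(p-4) (1-w)² dw = a⁻³ B(p-3, 3) = 2 / (a³ (p-1)(p-2)(p-3))`.
For `a = ξ g` and `p = 3 (1 + 1/ξ)` this is `2 / (3 g³ (ξ+3)(2ξ+3))`, and
`∫₀^∞ dξ / ((ξ+3)(2ξ+3)) = [log ((2ξ+3)/(ξ+3))]₀^∞ / 3 = log 2 / 3`.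
-/

open MeasureTheory Real Set Filter Topology

theorem lintegral_Ioi_ofReal_of_hasDerivAt_of_nonneg {F f : ℝ → ℝ} {a l : ℝ}
    (hcont : ContinuousWithinAt F (Ici a) a) (hderiv : ∀ x ∈ Ioi a, HasDerivAt F (f x) x)
    (hf : ∀ x ∈ Ioi a, 0 ≤ f x) (hF : Tendsto F atTop (𝓝 l)) :
    ∫⁻ x in Ioi a, ENNReal.ofReal (f x) = ENNReal.ofReal (l - F a) := by
  rw [← ofReal_integral_eq_lintegral_ofReal (integrableOn_Ioi_deriv_of_nonneg hcont hderiv hf hF)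
    ((ae_restrict_iff' measurableSet_Ioi).mpr (ae_of_all _ hf)),
    integral_Ioi_of_hasDerivAt_of_nonneg hcont hderiv hf hF]

theorem tendsto_mul_add_div_add_atTop (b c d : ℝ) :
    Tendsto (fun x : ℝ => (b * x + c) / (x + d)) atTop (𝓝 b) := by
  have h : Tendsto (fun x : ℝ => (b + c * x⁻¹) / (1 + d * x⁻¹)) atTop
      (𝓝 ((b + c * 0) / (1 + d * 0))) :=
    (tendsto_const_nhds.add (tendsto_inv_atTop_zero.const_mul c)).div
      (tendsto_const_nhds.add (tendsto_inv_atTop_zero.const_mul d)) (by norm_num)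
  rw [mul_zero, mul_zero, add_zero, add_zero, div_one] at h
  refine h.congr' ?_
  filter_upwards [eventually_gt_atTop 0] with x hx
  field_simp

/-- The incomplete beta function `B(w; p - 3, 3)`. -/
noncomputable def betaPrimitive (p w : ℝ) : ℝ :=
  w ^ (p - 3) / (p - 3) - 2 * w ^ (p - 2) / (p - 2) + w ^ (p - 1) / (p - 1)

section betaPrimitive

variable {p : ℝ}

theorem hasDerivAt_betaPrimitive (hp : 3 < p) {w : ℝ} (hw : 0 < w) :
    HasDerivAt (betaPrimitive p) (w ^ (p - 4) * (1 - w) ^ 2) w := by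
  have d3 := (hasDerivAt_rpow_const (p := p - 3) (Or.inl hw.ne')).div_const (p - 3)
  have d2 := ((hasDerivAt_rpow_const (p := p - 2) (Or.inl hw.ne')).const_mul 2).div_const (p - 2)
  have d1 := (hasDerivAt_rpow_const (p := p - 1) (Or.inl hw.ne')).div_const (p - 1)
  refine ((d3.sub d2).add d1).congr_deriv ?_
  have h3 : w ^ (p - 3) = w ^ (p - 4) * w := by
    rw [show p - 3 = p - 4 + 1 by ring, rpow_add_one hw.ne']
  have h2 : w ^ (p - 2) = w ^ (p - 4) * w ^ 2 := by
    rw [show p - 2 = p - 4 + 2 by ring, rpow_add hw, show (2 : ℝ) = (2 : ℕ) by norm_num,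
      rpow_natCast]
  rw [show p - 3 - 1 = p - 4 by ring, show p - 2 - 1 = p - 3 by ring,
    show p - 1 - 1 = p - 2 by ring, h3, h2]
  field_simp [show p - 3 ≠ 0 by linarith, show p - 2 ≠ 0 by linarith, show p - 1 ≠ 0 by linarith]
  ring

theorem continuous_betaPrimitive (hp : 3 < p) : Continuous (betaPrimitive p) := by
  unfold betaPrimitive
  fun_prop (disch := linarith)

theorem betaPrimitive_zero (hp : 3 < p) : betaPrimitive p 0 = 0 := by
  simp [betaPrimitive, zero_rpow, show p - 3 ≠ 0 by linarith, show p - 2 ≠ 0 by linarith,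
    show p - 1 ≠ 0 by linarith]

theorem betaPrimitive_one (hp : 3 < p) :
    betaPrimitive p 1 = 2 / ((p - 1) * (p - 2) * (p - 3)) := by
  simp only [betaPrimitive, one_rpow]
  field_simp [show p - 3 ≠ 0 by linarith, show p - 2 ≠ 0 by linarith, show p - 1 ≠ 0 by linarith]
  ring

end betaPrimitive

section betaSubstitution

variable {a p : ℝ}

theorem hasDerivAt_betaPrimitive_div_add (ha : 0 < a) (hp : 3 < p) {σ : ℝ} (hσ : 0 < σ) :
    HasDerivAt (fun x => betaPrimitive p (x / (x + a)) / a ^ 3)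
      (σ ^ (-4 : ℝ) * (σ / (σ + a)) ^ p) σ := by
  have hb : 0 < σ + a := by linarith
  have hw : 0 < σ / (σ + a) := div_pos hσ hb
  have hsub : HasDerivAt (fun x => x / (x + a)) (a / (σ + a) ^ 2) σ := by
    refine ((hasDerivAt_id σ).div ((hasDerivAt_id σ).add_const a) hb.ne').congr_deriv ?_
    simp only [id]
    ring
  refine (((hasDerivAt_betaPrimitive hp hw).comp σ hsub).div_const _).congr_deriv ?_
  rw [rpow_sub hw, rpow_neg hσ.le, show (4 : ℝ) = (4 : ℕ) by norm_num, rpow_natCast,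
    rpow_natCast]
  field_simp
  ring

theorem lintegral_rpow_neg_four_mul_one_add_div_rpow_neg (ha : 0 < a) (hp : 3 < p) :
    ∫⁻ σ in Ioi (0 : ℝ), ENNReal.ofReal (σ ^ (-(4 : ℝ)) * (1 + a / σ) ^ (-p))
      = ENNReal.ofReal (2 / (a ^ 3 * ((p - 1) * (p - 2) * (p - 3)))) := by
  have hintegrand : ∀ σ ∈ Ioi (0 : ℝ),
      ENNReal.ofReal (σ ^ (-(4 : ℝ)) * (1 + a / σ) ^ (-p))
        = ENNReal.ofReal (σ ^ (-4 : ℝ) * (σ / (σ + a)) ^ p) := by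
    intro σ (hσ : 0 < σ)
    have h : (1 + a / σ)⁻¹ = σ / (σ + a) := by field_simp
    rw [rpow_neg (x := 1 + a / σ) (by positivity), ← inv_rpow (by positivity), h]
  have hw : ContinuousAt (fun σ => σ / (σ + a)) 0 :=
    continuousAt_id.div (continuousAt_id.add continuousAt_const) (by simpa using ha.ne')
  have hlim : Tendsto (fun σ => σ / (σ + a)) atTop (𝓝 1) := by
    simpa using tendsto_mul_add_div_add_atTop 1 0 a
  rw [setLIntegral_congr_fun measurableSet_Ioi hintegrand,
    lintegral_Ioi_ofReal_of_hasDerivAt_of_nonneg (l := betaPrimitive p 1 / a ^ 3)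
      (((continuous_betaPrimitive hp).continuousAt.comp hw).continuousWithinAt.div_const _)
      (fun σ hσ => hasDerivAt_betaPrimitive_div_add ha hp hσ)
      (fun σ (hσ : 0 < σ) => by positivity)
      ((((continuous_betaPrimitive hp).tendsto 1).comp hlim).div_const _)]
  rw [Function.comp_apply, zero_div, betaPrimitive_zero hp, zero_div, sub_zero,
    betaPrimitive_one hp, div_div, mul_comm]

end betaSubstitution

theorem lintegral_inv_add_mul_two_mul_add {c : ℝ} (hc : 0 < c) :
    ∫⁻ ξ in Ioi (0 : ℝ), ENNReal.ofReal (((ξ + c) * (2 * ξ + c))⁻¹)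
      = ENNReal.ofReal (log 2 / c) := by
  set G : ℝ → ℝ := fun ξ => (log (2 * ξ + c) - log (ξ + c)) / c
  have hderiv : ∀ ξ ∈ Ici (0 : ℝ), HasDerivAt G (((ξ + c) * (2 * ξ + c))⁻¹) ξ := by
    intro ξ (hξ : 0 ≤ ξ)
    have h1 : 0 < ξ + c := by linarith
    have h2 : 0 < 2 * ξ + c := by linarith
    refine (((((hasDerivAt_id ξ).const_mul 2).add_const c).log h2.ne').sub
      (((hasDerivAt_id ξ).add_const c).log h1.ne') |>.div_const c).congr_deriv ?_
    simp only [id]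
    field_simp
    ring
  have hlim : Tendsto G atTop (𝓝 (log 2 / c)) := by
    refine (((continuousAt_log two_ne_zero).tendsto.comp
      (tendsto_mul_add_div_add_atTop 2 c c)).div_const c).congr' ?_
    filter_upwards [eventually_gt_atTop 0] with ξ hξ
    rw [Function.comp_apply, log_div (by positivity) (by positivity)]
  rw [lintegral_Ioi_ofReal_of_hasDerivAt_of_nonneg
    (hderiv 0 self_mem_Ici).continuousAt.continuousWithinAt
    (fun ξ hξ => hderiv ξ (mem_Ici_of_Ioi hξ)) (fun ξ (hξ : 0 < ξ) => by positivity) hlim]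
  simp [G]

theorem gp_I3_integral (g : ℝ) (hg : 0 < g) :
    ∫⁻ ξ in Set.Ioi (0 : ℝ),
        ∫⁻ σ in Set.Ioi (0 : ℝ),
          ENNReal.ofReal (σ ^ (-(4 : ℝ)) * (1 + ξ * g / σ) ^ (-(3 * (1 + 1 / ξ))))
      = ENNReal.ofReal ((2 / 9) * g ^ (-(3 : ℝ)) * Real.log 2) := by
  have inner : ∀ ξ ∈ Ioi (0 : ℝ),
      ∫⁻ σ in Ioi (0 : ℝ),
          ENNReal.ofReal (σ ^ (-(4 : ℝ)) * (1 + ξ * g / σ) ^ (-(3 * (1 + 1 / ξ))))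
        = ENNReal.ofReal (2 / (3 * g ^ 3)) * ENNReal.ofReal (((ξ + 3) * (2 * ξ + 3))⁻¹) := by
    intro ξ (hξ : 0 < ξ)
    have hp : 3 < 3 * (1 + 1 / ξ) := by
      have : 0 < 1 / ξ := by positivity
      linarith
    have hden : (ξ * g) ^ 3 *
          ((3 * (1 + 1 / ξ) - 1) * (3 * (1 + 1 / ξ) - 2) * (3 * (1 + 1 / ξ) - 3))
        = 3 * g ^ 3 * ((ξ + 3) * (2 * ξ + 3)) := by
      field_simp
      ring
    rw [lintegral_rpow_neg_four_mul_one_add_div_rpow_neg (by positivity) hp, hden,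
      div_mul_eq_div_div, div_eq_mul_inv, ENNReal.ofReal_mul (by positivity)]
  rw [setLIntegral_congr_fun measurableSet_Ioi inner,
    lintegral_const_mul' _ _ ENNReal.ofReal_ne_top, lintegral_inv_add_mul_two_mul_add three_pos,
    ← ENNReal.ofReal_mul (by positivity),
    rpow_neg hg.le, show (3 : ℝ) = (3 : ℕ) by norm_num, rpow_natCast]
  congr 1
  ring
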